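/- If the edge polytope P_G of a finite connected simple graph G is decomposable, then G contains a cycle of length 4. -/

import Mathlib

open scoped BigOperators

/-- `ρ(i,j) = e_i + e_j` -/
noncomputable def rho {d : ℕ} (i j : Fin d) : Fin d → ℝ :=
  fun t => (if t = i then 1 else 0) + (if t = j then 1 else 0)

/-- The edge polytope of a graph `G` on `[d]`. -/
noncomputable def edgePolytope {d : ℕ} (G : SimpleGraph (Fin d)) : Set (Fin d → ℝ) :=
  convexHull ℝ {x | ∃ i j, G.Adj i j ∧ x = rho i j}

/-- dot product -/
def dotp {d : ℕ} (a x : Fin d → ℝ) : ℝ := ∑ t, a t * x t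

/-- a polytope is integral if all its vertices (extreme points) are lattice points -/
def IsIntegralSet {d : ℕ} (P : Set (Fin d → ℝ)) : Prop :=
  ∀ x ∈ Set.extremePoints ℝ P, ∀ t, ∃ z : ℤ, x t = (z : ℝ)

/-- The hyperplane `a·x = b` decomposes `P`: it meets the relative interior of `P`,
both open sides meet `P`, and both closed half-space pieces are integral. -/
def Decomposes {d : ℕ} (P : Set (Fin d → ℝ)) (a : Fin d → ℝ) (b : ℝ) : Prop :=
  (∃ x ∈ intrinsicInterior ℝ P, dotp a x = b) ∧
  (∃ y ∈ P, dotp a y < b) ∧ (∃ y ∈ P, b < dotp a y) ∧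
  IsIntegralSet (P ∩ {x | b ≤ dotp a x}) ∧
  IsIntegralSet (P ∩ {x | dotp a x ≤ b})

/-!
Since `P_G` is the convex hull of the edge vectors `e_i + e_j`, a separating hyperplane `a·x = b`
has an edge `ij` strictly below it and an edge `kl` strictly above it. The segment between their
edge vectors crosses the hyperplane at a point `x` supported on `{i, j, k, l}`. Both pieces are
integral and the only integral points of `P_G` are edge vectors, so by Krein–Milman `x` is a
convex combination of upper edge vectors, and also of lower ones; by nonnegativity all these edges
lie inside `{i, j, k, l}`. No upper edge contains both `i` and `j`, so `x_i + x_j ≤ 1`, which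
fails if `kl` meets `ij`. Covering `i` and `j` by upper edges and `k` and `l` by lower edges then
yields the two crossing edges of a 4-cycle through `ij` and `kl`.
-/

open Matrix

lemma dotp_eq_dotProduct {d : ℕ} (a x : Fin d → ℝ) : dotp a x = a ⬝ᵥ x := rfl

lemma isLinearMap_dotp {d : ℕ} (a : Fin d → ℝ) : IsLinearMap ℝ (dotp a) :=
  ⟨dotProduct_add a, fun c x => dotProduct_smul c a x⟩

lemma continuous_dotp {d : ℕ} (a : Fin d → ℝ) : Continuous (dotp a) :=
  continuous_const.dotProduct continuous_id

lemma neg_dotp {d : ℕ} (a x : Fin d → ℝ) : dotp (-a) x = -dotp a x := neg_dotProduct a x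

section rho

variable {d : ℕ} {i j t : Fin d}

lemma rho_eq_single_add_single (i j : Fin d) : rho i j = Pi.single i 1 + Pi.single j 1 := by
  funext t; simp [rho, Pi.single_apply]

lemma rho_comm (i j : Fin d) : rho i j = rho j i := by
  funext t; simp [rho, add_comm]

lemma rho_apply_nonneg (i j t : Fin d) : 0 ≤ rho i j t := by unfold rho; positivity

lemma rho_nonneg (i j : Fin d) : 0 ≤ rho i j := rho_apply_nonneg i j

lemma rho_apply_left (h : i ≠ j) : rho i j i = 1 := by simp [rho, h]

lemma rho_apply_right (h : i ≠ j) : rho i j j = 1 := by simp [rho, h.symm]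

lemma one_le_rho_apply_left (i j : Fin d) : 1 ≤ rho i j i := by
  simp only [rho]; split_ifs <;> norm_num

lemma rho_apply_of_ne (hi : t ≠ i) (hj : t ≠ j) : rho i j t = 0 := by simp [rho, hi, hj]

lemma dotp_rho (a : Fin d → ℝ) (i j : Fin d) : dotp a (rho i j) = a i + a j := by
  simp [dotp_eq_dotProduct, rho_eq_single_add_single, dotProduct_add, dotProduct_single]

lemma rho_apply_add_rho_apply_le_one {p q : Fin d} (hij : i ≠ j) (hpq : p ≠ q)
    (h : s(p, q) ≠ s(i, j)) : rho i j p + rho i j q ≤ 1 := by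
  rw [Ne, Sym2.eq_iff] at h
  unfold rho
  split_ifs <;> subst_vars <;> simp_all

end rho

lemma exists_pos_support_subset_of_mem_convexHull {ι : Type*} {F : Set (ι → ℝ)}
    (hF : ∀ y ∈ F, 0 ≤ y) {x : ι → ℝ} (hx : x ∈ convexHull ℝ F) {t : ι} (ht : 0 < x t) :
    ∃ y ∈ F, 0 < y t ∧ ∀ s, x s = 0 → y s = 0 := by
  -- the set of nonnegative vectors with this property is convex and contains `F`
  let C : Set (ι → ℝ) :=
    {z | 0 ≤ z ∧ ∀ t, 0 < z t → ∃ y ∈ F, 0 < y t ∧ ∀ s, z s = 0 → y s = 0}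
  have hFC : F ⊆ C := fun y hy => ⟨hF y hy, fun t ht => ⟨y, hy, ht, fun _ => id⟩⟩
  have hC : Convex ℝ C := by
    intro u ⟨hu0, hu⟩ v ⟨hv0, hv⟩ α β hα hβ _
    have key : ∀ (γ δ : ℝ) (w w' : ι → ℝ), 0 ≤ γ → 0 ≤ δ → w ∈ C → 0 ≤ w' → ∀ t,
        0 < γ * w t → ∃ y ∈ F, 0 < y t ∧ ∀ s, γ * w s + δ * w' s = 0 → y s = 0 := by
      intro γ δ w w' hγ hδ hwC hw' t hpos
      obtain ⟨y, hyF, hyt, hys⟩ := hwC.2 t (pos_of_mul_pos_right hpos hγ)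
      refine ⟨y, hyF, hyt, fun s hs => hys s ?_⟩
      have hγs := (add_eq_zero_iff_of_nonneg (mul_nonneg hγ (hwC.1 s)) (mul_nonneg hδ (hw' s))).1 hs
      exact (mul_eq_zero.1 hγs.1).resolve_left (pos_of_mul_pos_left hpos (hwC.1 t)).ne'
    refine ⟨add_nonneg (smul_nonneg hα hu0) (smul_nonneg hβ hv0), fun t ht => ?_⟩
    simp only [Pi.add_apply, Pi.smul_apply, smul_eq_mul] at ht ⊢
    rcases lt_or_ge 0 (α * u t) with hpos | hnonpos
    · exact key α β u v hα hβ ⟨hu0, hu⟩ hv0 t hpos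
    · have hpos : 0 < β * v t := by linarith
      simpa only [add_comm] using key β α v u hβ hα ⟨hv0, hv⟩ hu0 t hpos
  exact (convexHull_min hFC hC hx).2 t ht

section edgePolytope

variable {d : ℕ} (G : SimpleGraph (Fin d))

def edgeVectors : Set (Fin d → ℝ) := {x | ∃ i j, G.Adj i j ∧ x = rho i j}

lemma rho_mem_edgeVectors {i j : Fin d} (h : G.Adj i j) : rho i j ∈ edgeVectors G :=
  ⟨i, j, h, rfl⟩

lemma edgeVectors_finite : (edgeVectors G).Finite :=
  (Set.finite_range fun p : Fin d × Fin d => rho p.1 p.2).subset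
    fun _ ⟨i, j, _, hx⟩ => ⟨(i, j), hx.symm⟩

lemma edgeVectors_nonneg : ∀ y ∈ edgeVectors G, 0 ≤ y := by
  rintro _ ⟨i, j, -, rfl⟩; exact rho_nonneg i j

variable {G}

lemma nonneg_of_mem_edgePolytope {z : Fin d → ℝ} (hz : z ∈ edgePolytope G) : 0 ≤ z :=
  convexHull_min (edgeVectors_nonneg G) (convex_Ici 0) hz

lemma sum_eq_two_of_mem_edgePolytope {z : Fin d → ℝ} (hz : z ∈ edgePolytope G) :
    ∑ t, z t = 2 := by
  have h : edgePolytope G ⊆ {x | dotp 1 x = 2} := by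
    refine convexHull_min ?_ (convex_hyperplane (isLinearMap_dotp 1) 2)
    rintro _ ⟨i, j, hij, rfl⟩
    show dotp 1 (rho i j) = 2
    rw [dotp_rho]; norm_num
  simpa [dotp] using h hz

lemma exists_adj_add_lt_of_dotp_lt {a : Fin d → ℝ} {b : ℝ} {y : Fin d → ℝ} (hy : y ∈ edgePolytope G)
    (hyb : dotp a y < b) : ∃ i j, G.Adj i j ∧ a i + a j < b := by
  by_contra! h
  have hsub : edgePolytope G ⊆ {x | b ≤ dotp a x} := by
    refine convexHull_min ?_ (convex_halfSpace_ge (isLinearMap_dotp a) b)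
    rintro _ ⟨i, j, hij, rfl⟩
    simpa [dotp_rho] using h i j hij
  exact (hsub hy).not_gt hyb

lemma exists_adj_lt_add_of_lt_dotp {a : Fin d → ℝ} {b : ℝ} {y : Fin d → ℝ} (hy : y ∈ edgePolytope G)
    (hyb : b < dotp a y) : ∃ i j, G.Adj i j ∧ b < a i + a j := by
  obtain ⟨i, j, hij, h⟩ :=
    exists_adj_add_lt_of_dotp_lt (a := -a) (b := -b) hy (by rw [neg_dotp]; linarith)
  exact ⟨i, j, hij, by simp only [Pi.neg_apply] at h; linarith⟩

lemma exists_adj_of_mem_convexHull_inter {H : Set (Fin d → ℝ)} {x : Fin d → ℝ}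
    (hx : x ∈ convexHull ℝ (edgeVectors G ∩ H)) {t : Fin d} (ht : 0 < x t) :
    ∃ s, G.Adj t s ∧ x s ≠ 0 ∧ rho t s ∈ H := by
  obtain ⟨_, ⟨⟨p, q, hpq, rfl⟩, hH⟩, hpos, hsupp⟩ := exists_pos_support_subset_of_mem_convexHull
    (fun y hy => edgeVectors_nonneg G y hy.1) hx ht
  have hx_ne : ∀ {s}, rho p q s = 1 → x s ≠ 0 := fun hs h0 => by simp [hsupp _ h0] at hs
  by_cases htp : t = p
  · subst htp
    exact ⟨q, hpq, hx_ne (rho_apply_right hpq.ne), hH⟩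
  · have htq : t = q := by
      by_contra htq; simp [rho_apply_of_ne htp htq] at hpos
    subst htq
    exact ⟨p, hpq.symm, hx_ne (rho_apply_left hpq.ne), by rwa [rho_comm]⟩

lemma mem_edgeVectors_of_mem_edgePolytope {z : Fin d → ℝ} (hz : z ∈ edgePolytope G)
    (hint : ∀ t, ∃ m : ℤ, z t = m) : z ∈ edgeVectors G := by
  have hnn := nonneg_of_mem_edgePolytope hz
  have hsum := sum_eq_two_of_mem_edgePolytope hz
  have hone : ∀ t, z t ≠ 0 → 1 ≤ z t := by
    intro t ht
    obtain ⟨m, hm⟩ := hint t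
    rw [hm] at ht ⊢
    have : (0 : ℝ) < m := lt_of_le_of_ne (hm ▸ hnn t) (Ne.symm ht)
    exact_mod_cast Int.cast_pos.mp this
  obtain ⟨t, ht⟩ : ∃ t, 0 < z t := by
    by_contra! h
    simp [fun t => le_antisymm (h t) (hnn t)] at hsum
  obtain ⟨_, ⟨p, q, hpq, rfl⟩, -, hsupp⟩ :=
    exists_pos_support_subset_of_mem_convexHull (edgeVectors_nonneg G) hz ht
  have hz_ne : ∀ {s}, rho p q s = 1 → z s ≠ 0 := fun hs h0 => by simp [hsupp _ h0] at hs
  have hle : ∀ s ∈ Finset.univ, rho p q s ≤ z s := by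
    intro s _
    by_cases hsp : s = p
    · subst hsp; rw [rho_apply_left hpq.ne]; exact hone _ (hz_ne (rho_apply_left hpq.ne))
    by_cases hsq : s = q
    · subst hsq; rw [rho_apply_right hpq.ne]; exact hone _ (hz_ne (rho_apply_right hpq.ne))
    rw [rho_apply_of_ne hsp hsq]; exact hnn s
  have hsum_eq : ∑ s, rho p q s = ∑ s, z s := by
    rw [hsum, ← sum_eq_two_of_mem_edgePolytope (subset_convexHull ℝ _ (rho_mem_edgeVectors G hpq))]
  refine ⟨p, q, hpq, funext fun s => ?_⟩
  exact ((Finset.sum_eq_sum_iff_of_le hle).1 hsum_eq s (Finset.mem_univ s)).symm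

end edgePolytope

section decomposition

variable {d : ℕ} {G : SimpleGraph (Fin d)}

/-- By Krein–Milman the piece is the convex hull of its extreme points, and these are integral
points of the edge polytope, i.e. edge vectors. -/
lemma subset_convexHull_inter_of_isIntegralSet {H : Set (Fin d → ℝ)} (hHconv : Convex ℝ H)
    (hHclosed : IsClosed H) (hint : IsIntegralSet (edgePolytope G ∩ H)) :
    edgePolytope G ∩ H ⊆ convexHull ℝ (edgeVectors G ∩ H) := by
  have hcompact : IsCompact (edgePolytope G ∩ H) :=
    ((edgeVectors_finite G).isCompact_convexHull ℝ).inter_right hHclosed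
  have hext : Set.extremePoints ℝ (edgePolytope G ∩ H) ⊆ edgeVectors G ∩ H := fun v hv =>
    ⟨mem_edgeVectors_of_mem_edgePolytope (extremePoints_subset hv).1 (hint v hv),
      (extremePoints_subset hv).2⟩
  calc edgePolytope G ∩ H
      = closure (convexHull ℝ (Set.extremePoints ℝ (edgePolytope G ∩ H))) :=
        (closure_convexHull_extremePoints hcompact ((convex_convexHull ℝ _).inter hHconv)).symm
    _ ⊆ closure (convexHull ℝ (edgeVectors G ∩ H)) := closure_mono (convexHull_mono hext)
    _ = convexHull ℝ (edgeVectors G ∩ H) :=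
        (((edgeVectors_finite G).subset Set.inter_subset_left).isClosed_convexHull ℝ).closure_eq

variable {a : Fin d → ℝ} {b : ℝ} {i j k l : Fin d}

lemma exists_mem_convexHull_upper (hint : IsIntegralSet (edgePolytope G ∩ {x | b ≤ dotp a x}))
    (hij : G.Adj i j) (hkl : G.Adj k l) (hneg : a i + a j < b) (hpos : b < a k + a l) :
    ∃ μ : ℝ, 0 < μ ∧ μ < 1 ∧
      μ • rho i j + (1 - μ) • rho k l ∈ convexHull ℝ (edgeVectors G ∩ {x | b ≤ dotp a x}) := by
  have hgap : 0 < a k + a l - (a i + a j) := by linarith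
  set μ := (a k + a l - b) / (a k + a l - (a i + a j)) with hμ
  have hμ0 : 0 < μ := div_pos (by linarith) hgap
  have hμ1 : μ < 1 := (div_lt_one hgap).2 (by linarith)
  have hmem : μ • rho i j + (1 - μ) • rho k l ∈ edgePolytope G :=
    convex_convexHull ℝ _ (subset_convexHull ℝ _ (rho_mem_edgeVectors G hij))
      (subset_convexHull ℝ _ (rho_mem_edgeVectors G hkl)) hμ0.le (by linarith) (by ring)
  have hdotp : dotp a (μ • rho i j + (1 - μ) • rho k l) = b := by
    rw [(isLinearMap_dotp a).map_add, (isLinearMap_dotp a).map_smul,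
      (isLinearMap_dotp a).map_smul, dotp_rho, dotp_rho, hμ, smul_eq_mul, smul_eq_mul]
    field_simp
    ring
  exact ⟨μ, hμ0, hμ1, subset_convexHull_inter_of_isIntegralSet
    (convex_halfSpace_ge (isLinearMap_dotp a) b)
    (isClosed_le continuous_const (continuous_dotp a)) hint ⟨hmem, hdotp.ge⟩⟩

lemma ne_of_mem_convexHull_upper {μ : ℝ} (hij : G.Adj i j)
    (hneg : a i + a j < b) (hμ0 : 0 < μ) (hμ1 : μ < 1)
    (hx : μ • rho i j + (1 - μ) • rho k l ∈ convexHull ℝ (edgeVectors G ∩ {x | b ≤ dotp a x})) :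
    i ≠ k := by
  rintro rfl
  -- every edge vector other than `rho i j` meets `{i, j}` in at most one vertex
  have hbound : ∀ y ∈ edgeVectors G ∩ {x | b ≤ dotp a x}, dotp (rho i j) y ≤ 1 := by
    rintro _ ⟨⟨p, q, hpq, rfl⟩, hb⟩
    rw [dotp_rho]
    refine rho_apply_add_rho_apply_le_one hij.ne hpq.ne fun h => ?_
    rcases Sym2.eq_iff.1 h with ⟨rfl, rfl⟩ | ⟨rfl, rfl⟩ <;>
      simp only [Set.mem_ofPred_eq, dotp_rho] at hb <;> linarith
  have hle : dotp (rho i j) (μ • rho i j + (1 - μ) • rho i l) ≤ 1 :=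
    convexHull_min hbound (convex_halfSpace_le (isLinearMap_dotp _) 1) hx
  simp only [(isLinearMap_dotp _).map_add, (isLinearMap_dotp _).map_smul,
    dotp_rho, smul_eq_mul, rho_apply_left hij.ne, rho_apply_right hij.ne] at hle
  nlinarith [mul_nonneg (sub_nonneg.2 hμ1.le) (rho_apply_nonneg i j l)]

lemma adj_of_mem_convexHull_upper {μ : ℝ} (hneg : a i + a j < b) (hμ0 : 0 < μ) (hμ1 : μ < 1)
    (hx : μ • rho i j + (1 - μ) • rho k l ∈ convexHull ℝ (edgeVectors G ∩ {x | b ≤ dotp a x})) :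
    G.Adj i k ∨ G.Adj i l := by
  have hxi : 0 < (μ • rho i j + (1 - μ) • rho k l) i := by
    simp only [Pi.add_apply, Pi.smul_apply, smul_eq_mul]
    nlinarith [one_le_rho_apply_left i j,
      mul_nonneg (sub_nonneg.2 hμ1.le) (rho_apply_nonneg k l i)]
  obtain ⟨s, his, hxs, hsH⟩ := exists_adj_of_mem_convexHull_inter hx hxi
  have hsj : s ≠ j := by
    rintro rfl
    simp only [Set.mem_ofPred_eq, dotp_rho] at hsH
    linarith
  have hs : s = k ∨ s = l := by
    by_contra! h
    simp [rho_apply_of_ne his.ne' hsj, rho_apply_of_ne h.1 h.2] at hxs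
  rcases hs with rfl | rfl
  exacts [Or.inl his, Or.inr his]

lemma ne_and_adj_of_isIntegralSet_upper
    (hint : IsIntegralSet (edgePolytope G ∩ {x | b ≤ dotp a x}))
    (hij : G.Adj i j) (hkl : G.Adj k l) (hneg : a i + a j < b) (hpos : b < a k + a l) :
    i ≠ k ∧ (G.Adj i k ∨ G.Adj i l) := by
  obtain ⟨μ, hμ0, hμ1, hx⟩ := exists_mem_convexHull_upper hint hij hkl hneg hpos
  exact ⟨ne_of_mem_convexHull_upper hij hneg hμ0 hμ1 hx,
    adj_of_mem_convexHull_upper hneg hμ0 hμ1 hx⟩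

lemma cycle_compatible_of_isIntegralSet (hup : IsIntegralSet (edgePolytope G ∩ {x | b ≤ dotp a x}))
    (hlow : IsIntegralSet (edgePolytope G ∩ {x | dotp a x ≤ b}))
    (hij : G.Adj i j) (hkl : G.Adj k l) (hneg : a i + a j < b) (hpos : b < a k + a l) :
    i ≠ k ∧ i ≠ l ∧ j ≠ k ∧ j ≠ l ∧ (G.Adj i k ∧ G.Adj j l ∨ G.Adj i l ∧ G.Adj j k) := by
  -- negating `a` and `b` swaps the two sides of the hyperplane
  have hlow' : IsIntegralSet (edgePolytope G ∩ {x | -b ≤ dotp (-a) x}) := by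
    simpa only [neg_dotp, neg_le_neg_iff] using hlow
  obtain ⟨hik, hi⟩ := ne_and_adj_of_isIntegralSet_upper hup hij hkl hneg hpos
  obtain ⟨hjk, hj⟩ := ne_and_adj_of_isIntegralSet_upper hup hij.symm hkl (by linarith) hpos
  obtain ⟨hil, -⟩ := ne_and_adj_of_isIntegralSet_upper hup hij hkl.symm hneg (by linarith)
  obtain ⟨hjl, -⟩ :=
    ne_and_adj_of_isIntegralSet_upper hup hij.symm hkl.symm (by linarith) (by linarith)
  obtain ⟨-, hk⟩ := ne_and_adj_of_isIntegralSet_upper hlow' hkl hij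
    (by simp only [Pi.neg_apply]; linarith) (by simp only [Pi.neg_apply]; linarith)
  obtain ⟨-, hl⟩ := ne_and_adj_of_isIntegralSet_upper hlow' hkl.symm hij
    (by simp only [Pi.neg_apply]; linarith) (by simp only [Pi.neg_apply]; linarith)
  rw [G.adj_comm k i, G.adj_comm k j] at hk
  rw [G.adj_comm l i, G.adj_comm l j] at hl
  exact ⟨hik, hil, hjk, hjl, by tauto⟩

end decomposition

theorem stmt4_general {d : ℕ} (G : SimpleGraph (Fin d))
    (h : ∃ (a : Fin d → ℝ) (b : ℝ), Decomposes (edgePolytope G) a b) :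
    ∃ p q r s : Fin d, p ≠ q ∧ p ≠ r ∧ p ≠ s ∧ q ≠ r ∧ q ≠ s ∧ r ≠ s ∧
      G.Adj p q ∧ G.Adj q r ∧ G.Adj r s ∧ G.Adj s p := by
  obtain ⟨a, b, -, ⟨y, hy, hyb⟩, ⟨y', hy', hy'b⟩, hup, hlow⟩ := h
  obtain ⟨i, j, hij, hneg⟩ := exists_adj_add_lt_of_dotp_lt hy hyb
  obtain ⟨k, l, hkl, hpos⟩ := exists_adj_lt_add_of_lt_dotp hy' hy'b
  obtain ⟨hik, hil, hjk, hjl, hik' | hil'⟩ :=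
    cycle_compatible_of_isIntegralSet hup hlow hij hkl hneg hpos
  · exact ⟨i, j, l, k, hij.ne, hil, hik, hjl, hjk, hkl.ne', hij, hik'.2, hkl.symm, hik'.1.symm⟩
  · exact ⟨i, j, k, l, hij.ne, hik, hil, hjk, hjl, hkl.ne, hij, hil'.2, hkl, hil'.1.symm⟩

/-- if the edge polytope of a connected graph G is decomposable,
then G contains a cycle of length 4. -/
theorem stmt4 {d : ℕ} (G : SimpleGraph (Fin d)) (hG : G.Connected)
    (h : ∃ (a : Fin d → ℝ) (b : ℝ), Decomposes (edgePolytope G) a b) :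
    ∃ p q r s : Fin d, p ≠ q ∧ p ≠ r ∧ p ≠ s ∧ q ≠ r ∧ q ≠ s ∧ r ≠ s ∧
      G.Adj p q ∧ G.Adj q r ∧ G.Adj r s ∧ G.Adj s p :=
  stmt4_general G h
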